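/- Let S be a finite subset of the positive reals satisfying the 4-values condition, and let C be a non-S-metric cycle. Then there exists a family of disjoint 'unimportant' subpaths P^1,...,P^p of C such that the cycle obtained by contracting each P^i to a single vertex is a non-S-metric cycle on at most 2|S| vertices, and every cycle obtained from C by replacing each P^i with any path P'^i all of whose distances are at most max(B(P^i)) is again non-S-metric. -/

import Mathlib

def FourValues (S : Set ℝ) : Prop :=
  ∀ a ∈ S, ∀ b ∈ S, ∀ c ∈ S, ∀ d ∈ S,
    (∃ x ∈ S, |a - b| ≤ x ∧ x ≤ a + b ∧ |c - d| ≤ x ∧ x ≤ c + d) →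
    (∃ y ∈ S, |a - c| ≤ y ∧ y ≤ a + c ∧ |b - d| ≤ y ∧ y ≤ b + d)

def IsJump (T : Set ℝ) (a : ℝ) : Prop :=
  a ∈ T ∧ (∃ b ∈ T, a < b) ∧ ∀ b ∈ T, a < b → 2 * a ≤ b

def NoJump (T : Set ℝ) : Prop := ∀ a, ¬ IsJump T a

def IsBlock (S B : Set ℝ) : Prop :=
  B ⊆ S ∧ FourValues B ∧ NoJump B ∧
    ∀ B', B ⊆ B' → B' ⊆ S → FourValues B' → NoJump B' → B' = B

/-- The `⊕_S`-length of a nonempty list of edge labels. -/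
def oplusFold (op : ℝ → ℝ → ℝ) : List ℝ → ℝ
  | [] => 0
  | a :: r => r.foldl op a

/-- The maximal label of a list of (positive) labels. -/
def maxLab (l : List ℝ) : ℝ := l.foldr max 0

/- ### Auxiliary material -/

open Classical in
/-- Segment decomposition: each label becomes its own segment, marked
unimportant iff it does not change the running `⊕`-sum `v`. -/
noncomputable def mkSegs (op : ℝ → ℝ → ℝ) : ℝ → List ℝ → List (List ℝ × Bool)
  | _, [] => []
  | v, d :: r => ([d], if op v d = v then true else false) :: mkSegs op (op v d) r

section aux

variable {S : Finset ℝ} (hSpos : ∀ s ∈ S, (0 : ℝ) < s)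
variable {op : ℝ → ℝ → ℝ}
variable (hop : ∀ a ∈ (S : Set ℝ), ∀ b ∈ (S : Set ℝ),
      IsGreatest {x | x ∈ (S : Set ℝ) ∧ x ≤ a + b} (op a b))

include hop hSpos

lemma op_mem {a b : ℝ} (ha : a ∈ (S : Set ℝ)) (hb : b ∈ (S : Set ℝ)) :
    op a b ∈ (S : Set ℝ) := (hop a ha b hb).1.1

lemma op_le_add {a b : ℝ} (ha : a ∈ (S : Set ℝ)) (hb : b ∈ (S : Set ℝ)) :
    op a b ≤ a + b := (hop a ha b hb).1.2

lemma left_le_op {a b : ℝ} (ha : a ∈ (S : Set ℝ)) (hb : b ∈ (S : Set ℝ)) :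
    a ≤ op a b :=
  (hop a ha b hb).2 ⟨ha, by have := hSpos b hb; linarith⟩

lemma foldl_mem {l : List ℝ} (hl : ∀ x ∈ l, x ∈ (S : Set ℝ)) :
    ∀ {v : ℝ}, v ∈ (S : Set ℝ) → l.foldl op v ∈ (S : Set ℝ) := by
  induction l with
  | nil => intro v hv; simpa using hv
  | cons d r ih =>
    intro v hv
    exact ih (fun x hx => hl x (List.mem_cons_of_mem _ hx))
      (op_mem hSpos hop hv (hl d List.mem_cons_self))

/-- Key lemma: if the running sum `v` absorbs some member `m` of a block `B`,
then it absorbs every member of `S` below `max B`. -/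
lemma key (h4 : FourValues (S : Set ℝ)) {B : Set ℝ} (hB : IsBlock (↑S) B)
    {mB : ℝ} (hmB : IsGreatest B mB) {v : ℝ} (hv : v ∈ (S : Set ℝ))
    {m : ℝ} (hm : m ∈ B) (hvm : op v m = v)
    {y : ℝ} (hy : y ∈ (S : Set ℝ)) (hymB : y ≤ mB) : op v y = v := by
  obtain ⟨hBS, _hB4, hBnj, _hBmax⟩ := hB
  have hvpos : (0 : ℝ) < v := hSpos v hv
  -- the absorption predicate
  set Q : ℝ → Prop := fun t => ∀ s ∈ (S : Set ℝ), s ≤ v + t → s ≤ v with hQ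
  have hQm : Q m := by
    intro s hs hsle
    have := (hop v hv m (hBS hm)).2 ⟨hs, hsle⟩
    rw [hvm] at this; exact this
  -- absorption implies boundedness
  have Qle : ∀ t ∈ B, Q t → t ≤ v := by
    intro t ht hQt
    exact hQt t (hBS ht) (by linarith)
  -- the inductive step along the block
  have step : ∀ b ∈ B, Q b → ∀ c ∈ B, b < c → c < 2 * b → Q c := by
    intro b hb hQb c hc hbc hc2 s hs hsle
    by_contra hsv
    push_neg at hsv
    have hbv : b ≤ v := Qle b hb hQb
    have hsb : v + b < s := by
      by_contra hle; push_neg at hle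
      exact hsv.not_ge (hQb s hs hle)
    have hbpos : (0 : ℝ) < b := hSpos b (hBS hb)
    -- apply the 4-values condition with (s, v, b, b), witness c
    obtain ⟨y', hy'S, h1, h2, h3, h4'⟩ :=
      h4 s hs v hv b (hBS hb) b (hBS hb)
        ⟨c, hBS hc, by rw [abs_of_pos (by linarith : (0:ℝ) < s - v)]; linarith,
          by linarith, by rw [abs_of_nonneg (by linarith : (0:ℝ) ≤ b - b)]; linarith,
          by linarith⟩
    -- y' ∈ S, v < y' ≤ v + b contradicts Q b
    have h1' : s - b ≤ y' := le_trans (le_abs_self _) h1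
    have hy'v : v < y' := by linarith
    have hy'le : y' ≤ v + b := h4'
    exact hy'v.not_ge (hQb y' hy'S hy'le)
  -- climb the block to its maximum
  have hQmB : Q mB := by
    set T : Set ℝ := {b | b ∈ B ∧ Q b} with hT
    have hTfin : T.Finite :=
      Set.Finite.subset S.finite_toSet (fun x hx => hBS hx.1)
    have hTne : T.Nonempty := ⟨m, hm, hQm⟩
    obtain ⟨b, hbT, hbmax⟩ := Set.exists_max_image T id hTfin hTne
    rcases eq_or_lt_of_le (hmB.2 hbT.1) with heq | hlt
    · rw [heq] at hbT
      exact hbT.2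
    · -- b is not maximal in B, so by NoJump there is c ∈ B, b < c < 2b
      exfalso
      have hnj := hBnj b
      rw [IsJump] at hnj
      push_neg at hnj
      obtain ⟨c, hcB, hbc, hc2⟩ := hnj hbT.1 ⟨mB, hmB.1, hlt⟩
      have hcT : c ∈ T := ⟨hcB, step b hbT.1 hbT.2 c hcB hbc (by linarith)⟩
      exact (hbmax c hcT).not_gt hbc
  -- conclude
  have hyv : op v y ≤ v :=
    hQmB (op v y) (op_mem hSpos hop hv hy) (by
      have := op_le_add hSpos hop hv hy; linarith)
  exact le_antisymm hyv (left_le_op hSpos hop hv hy)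

lemma absorb_fold (h4 : FourValues (S : Set ℝ)) {v d : ℝ}
    (hv : v ∈ (S : Set ℝ)) (hvd : op v d = v)
    {s' : List ℝ} (hs'S : ∀ x ∈ s', x ∈ (S : Set ℝ))
    (hblk : ∃ B mB, IsBlock (↑S) B ∧ IsGreatest B mB ∧ d ∈ B ∧ ∀ x ∈ s', x ≤ mB) :
    s'.foldl op v = v := by
  obtain ⟨B, mB, hB, hmB, hdB, hle⟩ := hblk
  induction s' with
  | nil => rfl
  | cons y r ih =>
    have hyv : op v y = v :=
      key hSpos hop h4 hB hmB hv hdB hvd (hs'S y List.mem_cons_self)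
        (hle y List.mem_cons_self)
    simp only [List.foldl_cons, hyv]
    exact ih (fun x hx => hs'S x (List.mem_cons_of_mem _ hx))
      (fun x hx => hle x (List.mem_cons_of_mem _ hx))

omit hSpos hop in
lemma mkSegs_flatten : ∀ (v : ℝ) (l : List ℝ),
    ((mkSegs op v l).map Prod.fst).flatten = l := by
  intro v l
  induction l generalizing v with
  | nil => rfl
  | cons d r ih => simp [mkSegs, ih]

/-- contracted fold is unchanged -/
lemma mkSegs_contract_fold : ∀ (v : ℝ) (l : List ℝ), v ∈ (S : Set ℝ) →
    (∀ x ∈ l, x ∈ (S : Set ℝ)) →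
    (((mkSegs op v l).map fun p => if p.2 then ([] : List ℝ) else p.1).flatten).foldl op v
      = l.foldl op v := by
  intro v l
  induction l generalizing v with
  | nil => intro _ _; rfl
  | cons d r ih =>
    intro hv hl
    have hvd : op v d ∈ (S : Set ℝ) :=
      op_mem hSpos hop hv (hl d List.mem_cons_self)
    have hr : ∀ x ∈ r, x ∈ (S : Set ℝ) := fun x hx => hl x (List.mem_cons_of_mem _ hx)
    by_cases h : op v d = v
    · simp only [mkSegs, h, List.map_cons, List.flatten_cons, List.foldl_cons,
        if_pos rfl, if_true, List.nil_append]
      exact ih v hv hr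
    · simp only [mkSegs, if_neg h, List.map_cons, List.flatten_cons, List.foldl_cons,
        List.singleton_append, List.foldl_cons]
      exact ih (op v d) hvd hr

/-- the contracted list is short: each retained label strictly increases `v`. -/
lemma mkSegs_contract_len : ∀ (v : ℝ) (l : List ℝ), v ∈ (S : Set ℝ) →
    (∀ x ∈ l, x ∈ (S : Set ℝ)) →
    (((mkSegs op v l).map fun p => if p.2 then ([] : List ℝ) else p.1).flatten).length
      ≤ (S.filter (fun x => v < x)).card := by
  intro v l
  induction l generalizing v with
  | nil => intro _ _; simp [mkSegs]
  | cons d r ih =>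
    intro hv hl
    have hdS : d ∈ (S : Set ℝ) := hl d List.mem_cons_self
    have hvd : op v d ∈ (S : Set ℝ) := op_mem hSpos hop hv hdS
    have hr : ∀ x ∈ r, x ∈ (S : Set ℝ) := fun x hx => hl x (List.mem_cons_of_mem _ hx)
    by_cases h : op v d = v
    · simp only [mkSegs, h, List.map_cons, List.flatten_cons, if_pos rfl, if_true,
        List.nil_append]
      exact ih v hv hr
    · simp only [mkSegs, if_neg h, List.map_cons, List.flatten_cons,
        List.singleton_append, List.length_cons]
      have hlt : v < op v d := lt_of_le_of_ne (left_le_op hSpos hop hv hdS) (Ne.symm h)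
      have hsub : S.filter (fun x => op v d < x) ⊆ (S.filter (fun x => v < x)).erase (op v d) := by
        intro x hx
        rw [Finset.mem_filter] at hx
        rw [Finset.mem_erase, Finset.mem_filter]
        exact ⟨by intro hxe; rw [hxe] at hx; exact lt_irrefl _ hx.2,
          hx.1, lt_trans hlt hx.2⟩
      have hmem : op v d ∈ S.filter (fun x => v < x) :=
        Finset.mem_filter.2 ⟨hvd, hlt⟩
      calc (((mkSegs op (op v d) r).map fun p => if p.2 then ([] : List ℝ) else p.1).flatten).length + 1
          ≤ (S.filter (fun x => op v d < x)).card + 1 := by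
            have := ih (op v d) hvd hr; omega
        _ ≤ ((S.filter (fun x => v < x)).erase (op v d)).card + 1 :=
            by have := Finset.card_le_card hsub; omega
        _ ≤ (S.filter (fun x => v < x)).card := by
            have := Finset.card_erase_add_one hmem; omega

/-- replacement invariance of the fold. -/
lemma mkSegs_repl (h4 : FourValues (S : Set ℝ)) : ∀ (v : ℝ) (l : List ℝ),
    v ∈ (S : Set ℝ) → (∀ x ∈ l, x ∈ (S : Set ℝ)) →
    ∀ l' : List (List ℝ),
      List.Forall₂ (fun (p : List ℝ × Bool) (s' : List ℝ) =>
        if p.2 then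
          s' ≠ [] ∧ (∀ x ∈ s', x ∈ (S : Set ℝ)) ∧
          ∃ B mB, IsBlock (↑S) B ∧ IsGreatest B mB ∧ maxLab p.1 ∈ B ∧
            ∀ x ∈ s', x ≤ mB
        else s' = p.1) (mkSegs op v l) l' →
      l'.flatten.foldl op v = l.foldl op v := by
  intro v l
  induction l generalizing v with
  | nil =>
    intro _ _ l' hf
    rw [mkSegs] at hf
    cases hf
    rfl
  | cons d r ih =>
    intro hv hl l' hf
    have hdS : d ∈ (S : Set ℝ) := hl d List.mem_cons_self
    have hvd : op v d ∈ (S : Set ℝ) := op_mem hSpos hop hv hdS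
    have hr : ∀ x ∈ r, x ∈ (S : Set ℝ) := fun x hx => hl x (List.mem_cons_of_mem _ hx)
    rw [mkSegs] at hf
    cases hf with
    | cons hp hrest =>
      rename_i s' r'
      by_cases h : op v d = v
      · rw [if_pos h] at hp
        simp only [if_pos, h] at hp
        have hp' : (s' ≠ [] ∧ (∀ x ∈ s', x ∈ (S : Set ℝ)) ∧
            ∃ B mB, IsBlock (↑S) B ∧ IsGreatest B mB ∧ maxLab [d] ∈ B ∧
              ∀ x ∈ s', x ≤ mB) := by simpa [h] using hp
        obtain ⟨_, hs'S, B, mB, hB, hmB, hdB, hle⟩ := hp'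
        have hmax : maxLab [d] = d := by
          have := hSpos d hdS
          simp [maxLab]; linarith
        rw [hmax] at hdB
        have hfold : s'.foldl op v = v :=
          absorb_fold hSpos hop h4 hv h hs'S ⟨B, mB, hB, hmB, hdB, hle⟩
        rw [h] at hrest
        rw [List.flatten_cons, List.foldl_append, hfold, List.foldl_cons, h]
        exact ih v hv hr r' hrest
      · have hs' : s' = [d] := by simpa [h] using hp
        subst hs'
        rw [List.flatten_cons, List.singleton_append, List.foldl_cons]
        rw [List.foldl_cons]
        exact ih (op v d) hvd hr r' hrest

end aux

/-- Unimportant-paths lemma: a non-`S`-metric cycle (path labels `ds` with a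
closing label `e` exceeding the `⊕_S`-length of `ds`) decomposes into segments,
some marked unimportant, such that contracting the unimportant segments yields
a non-`S`-metric cycle on at most `2|S|` vertices, and replacing each
unimportant segment `P` by any segment whose labels are at most `max B(P)`
again yields a non-`S`-metric cycle. -/
theorem stmt19 (S : Finset ℝ) (hSpos : ∀ s ∈ S, (0 : ℝ) < s) (h4 : FourValues ↑S)
    (op : ℝ → ℝ → ℝ)
    (hop : ∀ a ∈ (S : Set ℝ), ∀ b ∈ (S : Set ℝ),
      IsGreatest {x | x ∈ (S : Set ℝ) ∧ x ≤ a + b} (op a b))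
    (ds : List ℝ) (hds : ∀ x ∈ ds, x ∈ (S : Set ℝ)) (hdsne : ds ≠ [])
    (e : ℝ) (he : e ∈ (S : Set ℝ)) (hnm : oplusFold op ds < e) :
    ∃ segs : List (List ℝ × Bool),
      ds = (segs.map Prod.fst).flatten ∧
      (∀ p ∈ segs, p.2 = true → p.1 ≠ []) ∧
      oplusFold op ((segs.map fun p => if p.2 then ([] : List ℝ) else p.1).flatten) < e ∧
      ((segs.map fun p => if p.2 then ([] : List ℝ) else p.1).flatten).length + 1
        ≤ 2 * S.card ∧
      ∀ segs' : List (List ℝ),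
        List.Forall₂ (fun (p : List ℝ × Bool) (s' : List ℝ) =>
          if p.2 then
            s' ≠ [] ∧ (∀ x ∈ s', x ∈ (S : Set ℝ)) ∧
            ∃ B mB, IsBlock (↑S) B ∧ IsGreatest B mB ∧ maxLab p.1 ∈ B ∧
              ∀ x ∈ s', x ≤ mB
          else s' = p.1) segs segs' →
        oplusFold op segs'.flatten < e := by
  obtain ⟨d₁, rest, rfl⟩ : ∃ d r, ds = d :: r := by
    cases ds with
    | nil => exact absurd rfl hdsne
    | cons d r => exact ⟨d, r, rfl⟩
  have hd₁ : d₁ ∈ (S : Set ℝ) := hds d₁ List.mem_cons_self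
  have hrest : ∀ x ∈ rest, x ∈ (S : Set ℝ) := fun x hx => hds x (List.mem_cons_of_mem _ hx)
  refine ⟨([d₁], false) :: mkSegs op d₁ rest, ?_, ?_, ?_, ?_, ?_⟩
  · simp [mkSegs_flatten (op := op) d₁ rest]
  · rintro p hp ht
    rcases List.mem_cons.1 hp with rfl | hp'
    · simp at ht
    · rcases p with ⟨pl, pb⟩
      -- all segments of mkSegs are singletons
      have : ∀ v l, ∀ q ∈ mkSegs op v l, q.1 ≠ ([] : List ℝ) := by
        intro v l
        induction l generalizing v with
        | nil => intro q hq; simp [mkSegs] at hq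
        | cons d r ihq =>
          intro q hq
          rw [mkSegs] at hq
          rcases List.mem_cons.1 hq with rfl | hq'
          · simp
          · exact ihq (op v d) q hq'
      exact this d₁ rest _ hp'
  · simp only [List.map_cons, List.flatten_cons, if_neg (Bool.false_ne_true),
      List.singleton_append]
    show oplusFold op (d₁ :: _) < e
    rw [oplusFold]
    rw [mkSegs_contract_fold hSpos hop d₁ rest hd₁ hrest]
    exact hnm
  · simp only [List.map_cons, List.flatten_cons, if_neg (Bool.false_ne_true),
      List.singleton_append, List.length_cons]
    have h1 := mkSegs_contract_len hSpos hop d₁ rest hd₁ hrest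
    have h2 : (S.filter (fun x => d₁ < x)).card ≤ S.card - 1 := by
      have hsub : S.filter (fun x => d₁ < x) ⊆ S.erase d₁ := by
        intro x hx
        rw [Finset.mem_filter] at hx
        exact Finset.mem_erase.2 ⟨by intro hxe; rw [hxe] at hx; exact lt_irrefl _ hx.2, hx.1⟩
      have := Finset.card_le_card hsub
      have := Finset.card_erase_of_mem hd₁
      omega
    have hScard : 1 ≤ S.card := Finset.card_pos.2 ⟨e, he⟩
    omega
  · intro segs' hf
    cases hf with
    | cons hp hrest' =>
      rename_i s' r'
      have hs' : s' = [d₁] := by simpa using hp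
      subst hs'
      rw [List.flatten_cons, List.singleton_append]
      show oplusFold op (d₁ :: _) < e
      rw [oplusFold]
      rw [mkSegs_repl hSpos hop h4 d₁ rest hd₁ hrest r' hrest']
      exact hnm
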